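/- Let H and K be complex Hilbert spaces, M and N closed subspaces of H with M ∩ N = {0}, and A, B : H → K bounded linear operators. There exists a bounded linear operator C : H → K with C x = A x for all x ∈ M and C x = B x for all x ∈ N if and only if there exists a constant λ > 0 such that ‖(A − B) m‖² ≤ λ·(1 − ‖P_N m‖) for every m ∈ M with ‖m‖ = 1. -/

import Mathlib

/-!
`C - B` has to vanish on `N`, so it factors through the projection `Nᗮ.starProjection = 1 - P_N`.
Hence `C` exists iff `‖(A - B) m‖ ≤ c * ‖Nᗮ.starProjection m‖` on `M`: conversely
`C = B + g ∘ Nᗮ.starProjection`, where `g` is the bounded map `Nᗮ.starProjection m ↦ (A - B) m`,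
extended to the closure of its domain and composed with the projection onto that closure.
For a unit vector `m`, `‖Nᗮ.starProjection m‖ ^ 2 = (1 - ‖P_N m‖) * (1 + ‖P_N m‖)` lies between
`1 - ‖P_N m‖` and twice it, which turns this bound into the one of the theorem.
-/

/-- The orthogonal projection of a Hilbert space onto a closed subspace,
as a continuous linear operator on the whole space. -/
noncomputable def projCLM {H : Type*} [NormedAddCommGroup H] [InnerProductSpace ℂ H]
    [CompleteSpace H] (W : Submodule ℂ H) (hW : IsClosed (W : Set H)) : H →L[ℂ] H :=
  haveI : CompleteSpace W := hW.completeSpace_coe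
  W.subtypeL.comp W.orthogonalProjectionOnto

open Submodule

section

variable {𝕜 E F G H : Type*} [RCLike 𝕜]

theorem norm_apply_le_mul_norm_of_forall_norm_eq_one
    [NormedAddCommGroup E] [NormedSpace 𝕜 E] [SeminormedAddCommGroup F] [NormedSpace 𝕜 F]
    [SeminormedAddCommGroup G] [NormedSpace 𝕜 G]
    {M : Submodule 𝕜 E} {S : E →ₗ[𝕜] F} {T : E →ₗ[𝕜] G} {c : ℝ}
    (h : ∀ u ∈ M, ‖u‖ = 1 → ‖T u‖ ≤ c * ‖S u‖) {x : E} (hx : x ∈ M) :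
    ‖T x‖ ≤ c * ‖S x‖ := by
  rcases eq_or_ne x 0 with rfl | hx0
  · simp
  have hr : 0 < ‖x‖ := norm_pos_iff.2 hx0
  have key := h ((‖x‖ : 𝕜)⁻¹ • x) (M.smul_mem _ hx) (by simp [norm_smul, hr.ne'])
  simp only [map_smul, norm_smul, norm_inv, RCLike.norm_ofReal, abs_norm] at key
  rwa [mul_left_comm, mul_le_mul_iff_right₀ (inv_pos.2 hr)] at key

theorem LinearMap.exists_continuousLinearMap_comp_eq_of_norm_le
    [AddCommGroup E] [Module 𝕜 E]
    [NormedAddCommGroup H] [InnerProductSpace 𝕜 H] [CompleteSpace H]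
    [NormedAddCommGroup F] [NormedSpace 𝕜 F] [CompleteSpace F]
    (f : E →ₗ[𝕜] F) (e : E →ₗ[𝕜] H) (c : ℝ) (hfe : ∀ x, ‖f x‖ ≤ c * ‖e x‖) :
    ∃ g : H →L[𝕜] F, ∀ x, g (e x) = f x := by
  set W := (LinearMap.range e).topologicalClosure
  let e' : E →ₗ[𝕜] W :=
    e.codRestrict W fun x ↦ le_topologicalClosure _ (LinearMap.mem_range_self e x)
  have hdense : DenseRange e' := by
    rw [DenseRange, Subtype.dense_iff, ← Set.range_comp]
    exact (topologicalClosure_coe (LinearMap.range e)).subset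
  have hproj (x : E) : W.orthogonalProjectionOnto (e x) = e' x :=
    orthogonalProjectionOnto_mem_subspace_eq_self (e' x)
  refine ⟨(f.extendOfNorm e').comp W.orthogonalProjectionOnto, fun x ↦ ?_⟩
  rw [ContinuousLinearMap.comp_apply, hproj, extendOfNorm_eq hdense ⟨c, hfe⟩]

variable [NormedAddCommGroup H] [InnerProductSpace 𝕜 H]
  [NormedAddCommGroup F] [InnerProductSpace 𝕜 F]
  (M N : Submodule 𝕜 H) [N.HasOrthogonalProjection]

theorem exists_eqOn_and_eqOn_iff_norm_sub_apply_le [CompleteSpace H] [CompleteSpace F]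
    (A B : H →L[𝕜] F) :
    (∃ C : H →L[𝕜] F, (∀ x ∈ M, C x = A x) ∧ ∀ x ∈ N, C x = B x) ↔
      ∃ c, ∀ m ∈ M, ‖(A - B) m‖ ≤ c * ‖Nᗮ.starProjection m‖ := by
  constructor
  · rintro ⟨C, hCA, hCB⟩
    refine ⟨‖C - B‖, fun m hm ↦ ?_⟩
    have hPm : (C - B) (N.starProjection m) = 0 := by
      simp [hCB _ (N.starProjection_apply_mem m)]
    calc ‖(A - B) m‖ = ‖(C - B) (N.starProjection m + Nᗮ.starProjection m)‖ := by
          simp only [starProjection_add_starProjection_orthogonal, sub_apply, hCA m hm]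
      _ = ‖(C - B) (Nᗮ.starProjection m)‖ := by rw [map_add, hPm, zero_add]
      _ ≤ ‖C - B‖ * ‖Nᗮ.starProjection m‖ := (C - B).le_opNorm _
  · rintro ⟨c, hc⟩
    obtain ⟨g, hg⟩ := LinearMap.exists_continuousLinearMap_comp_eq_of_norm_le
      ((A - B).toLinearMap.comp M.subtype) ((Nᗮ.starProjection : H →ₗ[𝕜] H).comp M.subtype) c
      fun m ↦ hc m m.2
    refine ⟨B + g.comp Nᗮ.starProjection, fun x hx ↦ ?_, fun x hx ↦ ?_⟩
    · have hgx : g (Nᗮ.starProjection x) = A x - B x := hg ⟨x, hx⟩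
      rw [add_apply, ContinuousLinearMap.comp_apply, hgx, add_sub_cancel]
    · simp [starProjection_orthogonal_apply_eq_zero hx]

theorem exists_norm_apply_le_norm_starProjection_orthogonal_iff (T : H →L[𝕜] F) :
    (∃ c, ∀ m ∈ M, ‖T m‖ ≤ c * ‖Nᗮ.starProjection m‖) ↔
      ∃ lam : ℝ, 0 < lam ∧ ∀ m ∈ M, ‖m‖ = 1 →
        ‖T m‖ ^ 2 ≤ lam * (1 - ‖N.starProjection m‖) := by
  have pythagoras (m : H) (hm : ‖m‖ = 1) :
      ‖Nᗮ.starProjection m‖ ^ 2 = 1 - ‖N.starProjection m‖ ^ 2 := by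
    linarith [hm ▸ norm_sq_eq_add_norm_sq_starProjection m N]
  have hP (m : H) (hm : ‖m‖ = 1) : ‖N.starProjection m‖ ≤ 1 :=
    hm ▸ N.norm_starProjection_apply_le m
  constructor
  · rintro ⟨c, hc⟩
    refine ⟨2 * c ^ 2 + 1, by positivity, fun m hm hm1 ↦ ?_⟩
    have h1 : ‖T m‖ ^ 2 ≤ c ^ 2 * ‖Nᗮ.starProjection m‖ ^ 2 := by
      rw [← mul_pow]
      exact pow_le_pow_left₀ (norm_nonneg _) (hc m hm) 2
    rw [pythagoras m hm1] at h1
    nlinarith [hP m hm1, norm_nonneg (N.starProjection m), sq_nonneg c]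
  · rintro ⟨lam, hlam, h⟩
    refine ⟨√lam, fun m hm ↦ ?_⟩
    refine norm_apply_le_mul_norm_of_forall_norm_eq_one (S := (Nᗮ.starProjection : H →ₗ[𝕜] H))
      (T := (T : H →ₗ[𝕜] F)) (fun u hu hu1 ↦ ?_) hm
    rw [← pow_le_pow_iff_left₀ (norm_nonneg _) (by positivity) two_ne_zero, mul_pow,
      Real.sq_sqrt hlam.le]
    change ‖T u‖ ^ 2 ≤ lam * ‖Nᗮ.starProjection u‖ ^ 2
    rw [pythagoras u hu1]
    nlinarith [h u hu hu1, hP u hu1, norm_nonneg (N.starProjection u)]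

end

theorem projCLM_eq_starProjection {H : Type*} [NormedAddCommGroup H] [InnerProductSpace ℂ H]
    [CompleteSpace H] (N : Submodule ℂ H) (hN : IsClosed (N : Set H))
    [N.HasOrthogonalProjection] : projCLM N hN = N.starProjection :=
  rfl

theorem stmt_17_general {H K : Type*} [NormedAddCommGroup H] [InnerProductSpace ℂ H] [CompleteSpace H]
    [NormedAddCommGroup K] [InnerProductSpace ℂ K] [CompleteSpace K]
    (M N : Submodule ℂ H) (hN : IsClosed (N : Set H))
    (A B : H →L[ℂ] K) :
    (∃ C : H →L[ℂ] K, (∀ x ∈ M, C x = A x) ∧ (∀ x ∈ N, C x = B x)) ↔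
      (∃ lam : ℝ, 0 < lam ∧ ∀ m ∈ M, ‖m‖ = 1 →
        ‖(A - B) m‖ ^ 2 ≤ lam * (1 - ‖projCLM N hN m‖)) := by
  have : CompleteSpace N := hN.completeSpace_coe
  rw [projCLM_eq_starProjection, exists_eqOn_and_eqOn_iff_norm_sub_apply_le,
    exists_norm_apply_le_norm_starProjection_orthogonal_iff]

theorem stmt_17 {H K : Type*} [NormedAddCommGroup H] [InnerProductSpace ℂ H] [CompleteSpace H]
    [NormedAddCommGroup K] [InnerProductSpace ℂ K] [CompleteSpace K]
    (M N : Submodule ℂ H) (hM : IsClosed (M : Set H)) (hN : IsClosed (N : Set H))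
    (hMN : M ⊓ N = ⊥) (A B : H →L[ℂ] K) :
    (∃ C : H →L[ℂ] K, (∀ x ∈ M, C x = A x) ∧ (∀ x ∈ N, C x = B x)) ↔
      (∃ lam : ℝ, 0 < lam ∧ ∀ m ∈ M, ‖m‖ = 1 →
        ‖(A - B) m‖ ^ 2 ≤ lam * (1 - ‖projCLM N hN m‖)) :=
  stmt_17_general M N hN A B
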